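/- (Clustering lemma, part (iii).) Let T(R) be the parse tree of an extended regular expression R containing k ≥ 1 nodes labeled by an extended operator, and let CS be its cluster partition. Then CS contains at most 2k leaf clusters and at most 2k − 1 internal clusters, hence at most 4k − 1 clusters in total. -/
import Mathlib


/-- Extended regular expressions over alphabet `α`; their syntax trees are the parse trees. -/
inductive ERE (α : Type) : Type
  | eps : ERE α
  | char : α → ERE α
  | concat : ERE α → ERE α → ERE α
  | union : ERE α → ERE α → ERE α
  | inter : ERE α → ERE α → ERE α
  | compl : ERE α → ERE α
  | star : ERE α → ERE α

/-- Nodes of the parse tree `T(R)` are addressed by root-to-node paths (`false` = left/only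
child, `true` = right child); `subtreeAt R p` is the subexpression rooted at node `p`,
or `none` if `p` is not a node of `T(R)`. -/
def subtreeAt {α : Type} : ERE α → List Bool → Option (ERE α)
  | R, [] => some R
  | .concat S T, b :: p => subtreeAt (bif b then T else S) p
  | .union S T, b :: p => subtreeAt (bif b then T else S) p
  | .inter S T, b :: p => subtreeAt (bif b then T else S) p
  | .compl S, false :: p => subtreeAt S p
  | .star S, false :: p => subtreeAt S p
  | _, _ => none

/-- `p` is a node of the parse tree of `R`. -/
def IsNode {α : Type} (R : ERE α) (p : List Bool) : Prop := (subtreeAt R p).isSome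

/-- `p` is a node of the parse tree of `R` labeled by an extended operator (`∩` or `¬`). -/
def IsExtOpNode {α : Type} (R : ERE α) (p : List Bool) : Prop :=
  (∃ S T, subtreeAt R p = some (ERE.inter S T)) ∨ (∃ S, subtreeAt R p = some (ERE.compl S))

/-- `K R`: the set of nodes labeled by an extended operator. -/
def extOpNodes {α : Type} (R : ERE α) : Set (List Bool) := {p | IsExtOpNode R p}

/-- Longest common prefix = lowest common ancestor of two nodes. -/
def lcp : List Bool → List Bool → List Bool
  | a :: u, b :: v => if a = b then a :: lcp u v else []
  | _, _ => []

/-- `P R = K ∪ { lca(u,v) : u, v ∈ K }`: the set of extended nodes. -/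
def extNodes {α : Type} (R : ERE α) : Set (List Bool) :=
  extOpNodes R ∪ {w | ∃ u ∈ extOpNodes R, ∃ v ∈ extOpNodes R, w = lcp u v}

/-- An edge of `T(R)` from a node `p ∈ P` to a child of `p` is external; all other edges are
internal.  The clusters are the connected components after deleting the external edges; each
cluster is identified by its root, namely the node `r` that is either the root of `T(R)` or
whose parent edge is external. -/
def IsClusterRoot {α : Type} (R : ERE α) (r : List Bool) : Prop :=
  IsNode R r ∧ (r = [] ∨ r.dropLast ∈ extNodes R)

/-- The cluster with root `r`: all nodes `u` reachable from `r` going only through internal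
edges (the parent of a node `q` is `q.dropLast`). -/
def cluster {α : Type} (R : ERE α) (r : List Bool) : Set (List Bool) :=
  {u | IsNode R u ∧ r <+: u ∧
    ∀ q : List Bool, r <+: q → q <+: u → q ≠ r → q.dropLast ∉ extNodes R}

/-- In the macro tree, a cluster `C'` with root `q` is a child cluster of the cluster with
root `r` when the parent of `q` belongs to `cluster R r`. -/
def HasChildCluster {α : Type} (R : ERE α) (r : List Bool) : Prop :=
  ∃ q : List Bool, IsClusterRoot R q ∧ q ≠ [] ∧ q.dropLast ∈ cluster R r

/-- A leaf cluster: a cluster with no child cluster in the macro tree. -/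
def IsLeafCluster {α : Type} (R : ERE α) (r : List Bool) : Prop :=
  IsClusterRoot R r ∧ ¬ HasChildCluster R r

/-- An internal cluster: a cluster with at least one child cluster in the macro tree. -/
def IsInternalCluster {α : Type} (R : ERE α) (r : List Bool) : Prop :=
  IsClusterRoot R r ∧ HasChildCluster R r

/-! ### lcp lemmas -/

@[simp] lemma lcp_nil_left (v : List Bool) : lcp [] v = [] := by cases v <;> rfl
@[simp] lemma lcp_nil_right (u : List Bool) : lcp u [] = [] := by cases u <;> rfl
@[simp] lemma lcp_cons (a b : Bool) (u v : List Bool) :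
    lcp (a :: u) (b :: v) = if a = b then a :: lcp u v else [] := rfl

@[simp] lemma lcp_self (u : List Bool) : lcp u u = u := by
  induction u with
  | nil => rfl
  | cons a u ih => simp [ih]

lemma lcp_comm (u v : List Bool) : lcp u v = lcp v u := by
  induction u generalizing v with
  | nil => simp
  | cons a u ih =>
    cases v with
    | nil => simp
    | cons b v =>
      by_cases h : a = b
      · subst h; simp [ih]
      · simp [h, Ne.symm h]

lemma lcp_prefix_left (u v : List Bool) : lcp u v <+: u := by
  induction u generalizing v with
  | nil => simp
  | cons a u ih =>
    cases v with
    | nil => simp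
    | cons b v =>
      by_cases h : a = b
      · subst h; simpa [List.cons_prefix_cons] using ih v
      · simp [h]

lemma lcp_prefix_right (u v : List Bool) : lcp u v <+: v := by
  rw [lcp_comm]; exact lcp_prefix_left v u

lemma prefix_lcp {w u v : List Bool} (hu : w <+: u) (hv : w <+: v) : w <+: lcp u v := by
  induction w generalizing u v with
  | nil => simp
  | cons c w ih =>
    obtain ⟨u', rfl⟩ := hu
    obtain ⟨v', rfl⟩ := hv
    simpa [List.cons_prefix_cons] using ih (List.prefix_append w u') (List.prefix_append w v')

lemma exists_cons_prefix {a b : List Bool} (h : a <+: b) (hne : a ≠ b) :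
    ∃ c, a ++ [c] <+: b := by
  obtain ⟨t, rfl⟩ := h
  cases t with
  | nil => simp at hne
  | cons c t => exact ⟨c, t, by simp⟩

lemma lcp_eq_of_length_lt {x v w : List Bool}
    (h : (lcp x v).length < (lcp x w).length) : lcp v w = lcp x v := by
  have h1 : lcp x v <+: lcp x w :=
    List.prefix_of_prefix_length_le (lcp_prefix_left x v) (lcp_prefix_left x w) h.le
  have hvw : lcp x v <+: lcp v w :=
    prefix_lcp (lcp_prefix_right x v) (h1.trans (lcp_prefix_right x w))
  by_contra hne
  obtain ⟨c, hc⟩ := exists_cons_prefix hvw (fun he => hne he.symm)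
  obtain ⟨d, hd⟩ := exists_cons_prefix h1 (fun he => by rw [he] at h; omega)
  have hcv : lcp x v ++ [c] <+: v := hc.trans (lcp_prefix_left v w)
  have hcw : lcp x v ++ [c] <+: w := hc.trans (lcp_prefix_right v w)
  have hdx : lcp x v ++ [d] <+: x := hd.trans (lcp_prefix_left x w)
  have hdw : lcp x v ++ [d] <+: w := hd.trans (lcp_prefix_right x w)
  have hcd : lcp x v ++ [c] = lcp x v ++ [d] :=
    (List.prefix_of_prefix_length_le hcw hdw (by simp)).eq_of_length (by simp)
  rw [← hcd] at hdx
  have := (prefix_lcp hdx hcv).length_le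
  simp at this

/-! ### cardinality of the lcp-closure -/

def lcpSet (F : Finset (List Bool)) : Finset (List Bool) :=
  (F ×ˢ F).image (fun p => lcp p.1 p.2)

lemma mem_lcpSet {F : Finset (List Bool)} {u v : List Bool} (hu : u ∈ F) (hv : v ∈ F) :
    lcp u v ∈ lcpSet F := by
  simp only [lcpSet, Finset.mem_image]
  exact ⟨(u, v), Finset.mk_mem_product hu hv, rfl⟩

lemma lcpSet_card (F : Finset (List Bool)) : (lcpSet F).card ≤ 2 * F.card - 1 := by
  induction F using Finset.induction with
  | empty => simp [lcpSet]
  | @insert x F' hx ih =>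
    rcases F'.eq_empty_or_nonempty with rfl | hne
    · have : lcpSet {x} = {x} := by
        rw [lcpSet, Finset.singleton_product_singleton, Finset.image_singleton, lcp_self]
      simp [this]
    · obtain ⟨b0, hb0, hmax⟩ := F'.exists_max_image (fun v => (lcp x v).length) hne
      have key : ∀ v ∈ F', lcp x v ∈ insert (lcp x b0) (lcpSet F') := by
        intro v hv
        rcases lt_or_eq_of_le (hmax v hv) with hlt | heq
        · exact Finset.mem_insert_of_mem (lcp_eq_of_length_lt hlt ▸ mem_lcpSet hv hb0)
        · have : lcp x v = lcp x b0 :=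
            (List.prefix_of_prefix_length_le (lcp_prefix_left x v) (lcp_prefix_left x b0)
              heq.le).eq_of_length heq
          exact this ▸ Finset.mem_insert_self _ _
      have hsub : lcpSet (insert x F') ⊆ insert x (insert (lcp x b0) (lcpSet F')) := by
        intro w hw
        simp only [lcpSet, Finset.mem_image, Finset.mem_product, Finset.mem_insert] at hw
        obtain ⟨⟨u, v⟩, ⟨hu, hv⟩, rfl⟩ := hw
        simp only at hu hv ⊢
        rcases hu with rfl | hu <;> rcases hv with rfl | hv
        · rw [lcp_self]; exact Finset.mem_insert_self _ _
        · exact Finset.mem_insert_of_mem (key v hv)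
        · rw [lcp_comm u v]; exact Finset.mem_insert_of_mem (key u hu)
        · exact Finset.mem_insert_of_mem (Finset.mem_insert_of_mem (mem_lcpSet hu hv))
      have h1 : 1 ≤ F'.card := Finset.card_pos.mpr hne
      have := Finset.card_le_card hsub
      have := Finset.card_insert_le x (insert (lcp x b0) (lcpSet F'))
      have := Finset.card_insert_le (lcp x b0) (lcpSet F')
      rw [Finset.card_insert_of_notMem hx]
      omega

/-! ### parse tree lemmas -/

lemma subtreeAt_append {α : Type} (R : ERE α) (p q : List Bool) :
    subtreeAt R (p ++ q) = (subtreeAt R p).bind (fun S => subtreeAt S q) := by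
  induction p generalizing R with
  | nil => simp [subtreeAt]
  | cons b p ih => cases R <;> cases b <;> simp [subtreeAt, ih]

lemma isNode_prefix {α : Type} {R : ERE α} {q u : List Bool} (h : q <+: u)
    (hu : IsNode R u) : IsNode R q := by
  obtain ⟨t, rfl⟩ := h
  rw [IsNode] at hu ⊢
  rw [subtreeAt_append] at hu
  cases hq : subtreeAt R q with
  | none => rw [hq] at hu; simp at hu
  | some S => simp

def ht {α : Type} : ERE α → ℕ
  | .eps => 0
  | .char _ => 0
  | .concat S T => max (ht S) (ht T) + 1
  | .union S T => max (ht S) (ht T) + 1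
  | .inter S T => max (ht S) (ht T) + 1
  | .compl S => ht S + 1
  | .star S => ht S + 1

lemma length_le_ht {α : Type} {R : ERE α} {p : List Bool} (h : IsNode R p) :
    p.length ≤ ht R := by
  induction p generalizing R with
  | nil => simp
  | cons b p ih =>
    cases R <;> cases b <;> simp_all [IsNode, subtreeAt, ht]

lemma nodes_finite {α : Type} (R : ERE α) : {p : List Bool | IsNode R p}.Finite :=
  (List.finite_length_le Bool (ht R)).subset (fun _ h => length_le_ht h)

lemma extOp_isNode {α : Type} {R : ERE α} {p : List Bool} (h : p ∈ extOpNodes R) :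
    IsNode R p := by
  rcases h with ⟨S, T, hST⟩ | ⟨S, hS⟩ <;> simp [IsNode, *]

lemma extNodes_eq {α : Type} (R : ERE α) :
    extNodes R = {w | ∃ u ∈ extOpNodes R, ∃ v ∈ extOpNodes R, w = lcp u v} := by
  apply subset_antisymm
  · rintro w (hw | hw)
    · exact ⟨w, hw, w, hw, (lcp_self w).symm⟩
    · exact hw
  · exact Set.subset_union_right

lemma extNode_isNode {α : Type} {R : ERE α} {p : List Bool} (h : p ∈ extNodes R) :
    IsNode R p := by
  rw [extNodes_eq] at h
  obtain ⟨u, hu, v, hv, rfl⟩ := h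
  exact isNode_prefix (lcp_prefix_left u v) (extOp_isNode hu)

lemma extOp_child {α : Type} {R : ERE α} {p : List Bool} (h : p ∈ extOpNodes R) :
    IsNode R (p ++ [false]) := by
  rw [IsNode, subtreeAt_append]
  rcases h with ⟨S, T, hST⟩ | ⟨S, hS⟩ <;> rw [show subtreeAt R p = _ from by assumption] <;>
    simp [subtreeAt]

lemma extNode_child {α : Type} {R : ERE α} {p : List Bool} (h : p ∈ extNodes R) :
    ∃ b, IsNode R (p ++ [b]) := by
  rw [extNodes_eq] at h
  obtain ⟨u, hu, v, hv, rfl⟩ := h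
  by_cases he : lcp u v = u
  · rw [he]; exact ⟨false, extOp_child hu⟩
  · obtain ⟨c, hc⟩ := exists_cons_prefix (lcp_prefix_left u v) he
    exact ⟨c, isNode_prefix hc (extOp_isNode hu)⟩

/-- distinct cluster roots have disjoint clusters -/
lemma clusterRoot_unique {α : Type} {R : ERE α} {r r' q : List Bool}
    (hr : IsClusterRoot R r) (hr' : IsClusterRoot R r')
    (hq : q ∈ cluster R r) (hq' : q ∈ cluster R r') : r = r' := by
  by_contra hne
  have key : ∀ a b : List Bool, IsClusterRoot R b → a <+: b → a ≠ b →
      q ∈ cluster R a → b <+: q → False := by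
    intro a b hb hab hne hqa hbq
    have hbne : b ≠ [] := by
      rintro rfl
      exact hne (List.prefix_nil.mp hab)
    rcases hb.2 with h | h
    · exact hbne h
    · exact hqa.2.2 b hab hbq (fun he => hne he.symm) h
  rcases List.prefix_or_prefix_of_prefix hq.2.1 hq'.2.1 with h | h
  · exact key r r' hr' h hne hq hq'.2.1
  · exact key r' r hr h (fun he => hne he.symm) hq' hq.2.1

/-- if some extended node lies (weakly) below `r`, then the cluster of `r` has a child
cluster. -/
lemma hasChildCluster_of_le {α : Type} {R : ERE α} {r u : List Bool}
    (hu : u ∈ extNodes R) (hru : r <+: u) : HasChildCluster R r := by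
  classical
  have hQ : ∃ m, r <+: u.take m ∧ u.take m ∈ extNodes R :=
    ⟨u.length, by simpa using ⟨hru, hu⟩⟩
  set m0 := Nat.find hQ with hm0
  obtain ⟨hq1, hq2⟩ := Nat.find_spec hQ
  set q := u.take m0 with hqdef
  have hqu : q <+: u := List.take_prefix m0 u
  have hqnode : IsNode R q := isNode_prefix hqu (extNode_isNode hu)
  have hqcl : q ∈ cluster R r := by
    refine ⟨hqnode, hq1, ?_⟩
    intro q' hrq' hq'q hq'r hdrop
    have hq'ne : q' ≠ [] := by
      rintro rfl
      exact hq'r (List.prefix_nil.mp hrq').symm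
    have hlen : r.length < q'.length := by
      rcases Nat.lt_or_ge r.length q'.length with h | h
      · exact h
      · exact absurd (hrq'.eq_of_length (le_antisymm hrq'.length_le h)).symm hq'r
    have hrdl : r <+: q'.dropLast :=
      List.prefix_of_prefix_length_le hrq' (List.dropLast_prefix q')
        (by rw [List.length_dropLast]; omega)
    have hdlu : q'.dropLast <+: u := (List.dropLast_prefix q').trans (hq'q.trans hqu)
    have htake : q'.dropLast = u.take q'.dropLast.length := List.prefix_iff_eq_take.mp hdlu
    have hmlt : q'.dropLast.length < m0 := by
      have h1 : q'.length ≤ q.length := hq'q.length_le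
      have h2 : q.length ≤ m0 := by rw [hqdef, List.length_take]; omega
      rw [List.length_dropLast]
      omega
    exact Nat.find_min hQ hmlt ⟨htake ▸ hrdl, htake ▸ hdrop⟩
  obtain ⟨b, hb⟩ := extNode_child hq2
  refine ⟨q ++ [b], ⟨hb, Or.inr (by simpa using hq2)⟩, by simp, by simpa using hqcl⟩

lemma bool_eq_or {b c d : Bool} (h : c ≠ d) : b = c ∨ b = d := by
  cases b <;> cases c <;> cases d <;> simp_all

lemma leaf_root_spec {α : Type} {R : ERE α} (hKne : (extOpNodes R).Nonempty)
    {r : List Bool} (h : IsLeafCluster R r) :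
    ∃ hrne : r ≠ [], r.dropLast ∈ extOpNodes R := by
  obtain ⟨hroot, hnochild⟩ := h
  have hnoK : ∀ u ∈ extOpNodes R, ¬ r <+: u := fun u hu hru =>
    hnochild (hasChildCluster_of_le (Or.inl hu) hru)
  have hrne : r ≠ [] := by
    rintro rfl
    obtain ⟨u, hu⟩ := hKne
    exact hnoK u hu List.nil_prefix
  refine ⟨hrne, ?_⟩
  rcases hroot.2 with h | h
  · exact absurd h hrne
  rw [extNodes_eq] at h
  obtain ⟨u, hu, v, hv, hp⟩ := h
  by_cases heu : lcp u v = u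
  · rw [hp, heu]; exact hu
  by_cases hev : lcp u v = v
  · rw [hp, hev]; exact hv
  exfalso
  obtain ⟨c, hc⟩ := exists_cons_prefix (lcp_prefix_left u v) heu
  obtain ⟨d, hd⟩ := exists_cons_prefix (lcp_prefix_right u v) hev
  have hcd : c ≠ d := by
    rintro rfl
    have := (prefix_lcp hc hd).length_le
    simp at this
  have hr : r = lcp u v ++ [r.getLast hrne] := by
    conv_lhs => rw [← List.dropLast_append_getLast hrne]
    rw [hp]
  have hbc : r.getLast hrne = c ∨ r.getLast hrne = d := bool_eq_or hcd
  rcases hbc with hgc | hgd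
  · exact hnoK u hu (by rw [hr, hgc]; exact hc)
  · exact hnoK v hv (by rw [hr, hgd]; exact hd)

/-- Clustering lemma, part (iii): if the parse tree of `R` contains `k ≥ 1` nodes labeled
by an extended operator, then the cluster partition has at most `2k` leaf clusters, at most
`2k - 1` internal clusters, and hence at most `4k - 1` clusters in total. -/
theorem cluster_count {α : Type} (R : ERE α) (k : ℕ)
    (hk : (extOpNodes R).ncard = k) (hk1 : 1 ≤ k) :
    {r | IsLeafCluster R r}.ncard ≤ 2 * k ∧
    {r | IsInternalCluster R r}.ncard ≤ 2 * k - 1 ∧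
    {r | IsClusterRoot R r}.ncard ≤ 4 * k - 1 := by
  classical
  have hKfin : (extOpNodes R).Finite := (nodes_finite R).subset (fun p hp => extOp_isNode hp)
  have hKne : (extOpNodes R).Nonempty := Set.nonempty_of_ncard_ne_zero (by omega)
  have hPsub : extNodes R ⊆ ↑(lcpSet hKfin.toFinset) := by
    intro w hw
    rw [extNodes_eq] at hw
    obtain ⟨u, hu, v, hv, rfl⟩ := hw
    exact mem_lcpSet (hKfin.mem_toFinset.mpr hu) (hKfin.mem_toFinset.mpr hv)
  have hPfin : (extNodes R).Finite := (lcpSet hKfin.toFinset).finite_toSet.subset hPsub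
  have hKcard : hKfin.toFinset.card = k := by rw [← Set.ncard_eq_toFinset_card _ hKfin, hk]
  have hPcard : (extNodes R).ncard ≤ 2 * k - 1 := by
    have h1 := Set.ncard_le_ncard hPsub (lcpSet hKfin.toFinset).finite_toSet
    rw [Set.ncard_coe_finset] at h1
    have h2 := lcpSet_card hKfin.toFinset
    omega
  -- leaf bound
  have hleafsub : {r | IsLeafCluster R r} ⊆
      ((fun p => p ++ [false]) '' extOpNodes R) ∪ ((fun p => p ++ [true]) '' extOpNodes R) := by
    intro r hr
    obtain ⟨hrne, hdrop⟩ := leaf_root_spec hKne hr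
    have hre : r.dropLast ++ [r.getLast hrne] = r := List.dropLast_append_getLast hrne
    cases hb : r.getLast hrne
    · rw [hb] at hre
      exact Or.inl ⟨r.dropLast, hdrop, hre⟩
    · rw [hb] at hre
      exact Or.inr ⟨r.dropLast, hdrop, hre⟩
  have hleaf : {r | IsLeafCluster R r}.ncard ≤ 2 * k := by
    have h1 := Set.ncard_le_ncard hleafsub ((hKfin.image _).union (hKfin.image _))
    have h2 := Set.ncard_union_le ((fun p => p ++ [false]) '' extOpNodes R)
      ((fun p => p ++ [true]) '' extOpNodes R)
    have h3 := Set.ncard_image_le (f := fun p => p ++ [false]) hKfin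
    have h4 := Set.ncard_image_le (f := fun p => p ++ [true]) hKfin
    omega
  -- internal bound
  have hint : ∀ r ∈ {r | IsInternalCluster R r}, ∃ q, q ∈ extNodes R ∧ q ∈ cluster R r := by
    intro r hr
    obtain ⟨hroot, c, hcroot, hcne, hcdrop⟩ := hr
    refine ⟨c.dropLast, ?_, hcdrop⟩
    rcases hcroot.2 with h | h
    · exact absurd h hcne
    · exact h
  choose! f hf1 hf2 using hint
  have hinj : Set.InjOn f {r | IsInternalCluster R r} := by
    intro r hr r' hr' he
    exact clusterRoot_unique hr.1 hr'.1 (hf2 r hr) (he ▸ hf2 r' hr')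
  have hinternal : {r | IsInternalCluster R r}.ncard ≤ 2 * k - 1 := by
    rw [← Set.ncard_image_of_injOn hinj]
    refine le_trans (Set.ncard_le_ncard ?_ hPfin) hPcard
    rintro w ⟨r, hr, rfl⟩
    exact hf1 r hr
  -- total bound
  have hrootsub : {r | IsClusterRoot R r} ⊆
      {([] : List Bool)} ∪ (((fun p => p ++ [false]) '' extNodes R) ∪
        ((fun p => p ++ [true]) '' extNodes R)) := by
    intro r hr
    by_cases hrne : r = []
    · exact Or.inl (by simp [hrne])
    · rcases hr.2 with h | h
      · exact absurd h hrne
      right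
      have hre : r.dropLast ++ [r.getLast hrne] = r := List.dropLast_append_getLast hrne
      cases hb : r.getLast hrne
      · rw [hb] at hre
        exact Or.inl ⟨r.dropLast, h, hre⟩
      · rw [hb] at hre
        exact Or.inr ⟨r.dropLast, h, hre⟩
  have htotal : {r | IsClusterRoot R r}.ncard ≤ 4 * k - 1 := by
    have hfin : (({([] : List Bool)} : Set (List Bool)) ∪
        (((fun p => p ++ [false]) '' extNodes R) ∪ ((fun p => p ++ [true]) '' extNodes R))).Finite :=
      (Set.finite_singleton _).union ((hPfin.image _).union (hPfin.image _))
    have h1 := Set.ncard_le_ncard hrootsub hfin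
    have h2 := Set.ncard_union_le ({([] : List Bool)} : Set (List Bool))
      (((fun p => p ++ [false]) '' extNodes R) ∪ ((fun p => p ++ [true]) '' extNodes R))
    have h3 := Set.ncard_union_le ((fun p => p ++ [false]) '' extNodes R)
      ((fun p => p ++ [true]) '' extNodes R)
    have h4 := Set.ncard_image_le (f := fun p => p ++ [false]) hPfin
    have h5 := Set.ncard_image_le (f := fun p => p ++ [true]) hPfin
    have h6 : ({([] : List Bool)} : Set (List Bool)).ncard = 1 := Set.ncard_singleton _
    omega
  exact ⟨hleaf, hinternal, htotal⟩
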